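/- arXiv:1811.03070 — 2 statements merged into one kernel-verified Lean document; each statement's English description precedes it below -/
import Mathlib

section
/- For every S > 0 there exist ω > 0 and B ∈ [0,1) such that for all 0 < ε, δ < ω and every k ∈ K_S, the density k' = P_{ε,δ}(k) again belongs to K_S and satisfies Ψ(k') ≤ B · Ψ(k). -/
open MeasureTheory Set Filter

/-- The piecewise linear map `F(·; ε, δ)` of Example 2.3 on `[0,1]`. -/
noncomputable def Fpiece (ε δ y : ℝ) : ℝ :=
  if y < 1 / 4 then (4 + ε) * y
  else if y < 1 / 2 then (-2 - ε) * y + (3 + ε) / 2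
  else if y < 3 / 4 then (-2 - δ) * y + (3 + δ) / 2
  else (4 + δ) * y - (3 + δ)

/-- The shift-periodic map `F(x; ε, δ) = F({x}; ε, δ) + ⌊x⌋` on `ℝ`. -/
noncomputable def Fmap (ε δ x : ℝ) : ℝ := (⌊x⌋ : ℝ) + Fpiece ε δ (Int.fract x)

/-- The restricted map `F_r(x; ε, δ) = {F(x; ε, δ)}`. -/
noncomputable def FrMap (ε δ x : ℝ) : ℝ := Int.fract (Fmap ε δ x)

/-- The un-normalised conditioned Frobenius–Perron operator of `F(·; ε, δ)`. -/
noncomputable def FPpre (ε δ : ℝ) (f : ℝ → ℝ) (s : ℝ) : ℝ :=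
  if s < 1 / 2 then
    f (s / (4 + ε)) / (4 + ε) + f (((3 + δ) / 2 - s) / (2 + δ)) / (2 + δ)
      + f ((s + 3 + δ) / (4 + δ)) / (4 + δ)
  else
    f (s / (4 + ε)) / (4 + ε) + f (((3 + ε) / 2 - s) / (2 + ε)) / (2 + ε)
      + f ((s + 3 + δ) / (4 + δ)) / (4 + δ)

/-- The Frobenius–Perron operator `P_{ε,δ}` of `F(·; ε, δ)` conditioned on staying in `[0,1]`,
normalised so that the image integrates to `1` over `[0,1]`. -/
noncomputable def FPop (ε δ : ℝ) (f : ℝ → ℝ) (s : ℝ) : ℝ :=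
  FPpre ε δ f s / ∫ u in Set.Icc (0 : ℝ) 1, FPpre ε δ f u

/-- The candidate conditionally invariant density: `ν` on `(0, 1/2)`, `2 - ν` on `(1/2, 1)`. -/
noncomputable def condDensity (ν s : ℝ) : ℝ := if s < 1 / 2 then ν else 2 - ν

/-- The sup-norm of a function over `[0,1]`. -/
noncomputable def supNorm01 (f : ℝ → ℝ) : ℝ := ⨆ s : Set.Icc (0 : ℝ) 1, |f (s : ℝ)|

/-- A three-piece representation of `k` with break point `b ∈ (0, 1/2)`:
`k = k₁` on `(0,b)`, `k = k₂` on `(b,1/2)`, `k = k₃` on `(1/2,1)`. -/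
def KSRep1 (k : ℝ → ℝ) (b k1 k2 k3 : ℝ) : Prop :=
  b ∈ Set.Ioo (0 : ℝ) (1 / 2) ∧ 0 ≤ k1 ∧ 0 ≤ k2 ∧ 0 ≤ k3 ∧
  (∀ s ∈ Set.Ioo 0 b, k s = k1) ∧ (∀ s ∈ Set.Ioo b (1 / 2 : ℝ), k s = k2) ∧
  (∀ s ∈ Set.Ioo (1 / 2 : ℝ) 1, k s = k3)

/-- A three-piece representation of `k` with break point `b ∈ (1/2, 1)`:
`k = k₁` on `(0,1/2)`, `k = k₂` on `(1/2,b)`, `k = k₃` on `(b,1)`. -/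
def KSRep2 (k : ℝ → ℝ) (b k1 k2 k3 : ℝ) : Prop :=
  b ∈ Set.Ioo (1 / 2 : ℝ) 1 ∧ 0 ≤ k1 ∧ 0 ≤ k2 ∧ 0 ≤ k3 ∧
  (∀ s ∈ Set.Ioo (0 : ℝ) (1 / 2), k s = k1) ∧ (∀ s ∈ Set.Ioo (1 / 2 : ℝ) b, k s = k2) ∧
  (∀ s ∈ Set.Ioo b 1, k s = k3)

/-- The class `K_S` of piecewise constant probability densities on `[0,1]` of Definition 4.8. -/
def MemKS (S : ℝ) (k : ℝ → ℝ) : Prop :=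
  (∫ s in Set.Icc (0 : ℝ) 1, k s) = 1 ∧
  ((∃ b k1 k2 k3, KSRep1 k b k1 k2 k3 ∧ |k1 - k2| ≤ S) ∨
   (∃ b k1 k2 k3, KSRep2 k b k1 k2 k3 ∧ |k2 - k3| ≤ S))

/-- `ψ` is a value of the map `Ψ` at `k`: the jump `|k₁-k₂|` (resp. `|k₂-k₃|`) of some
three-piece representation of `k`. -/
def PsiWitness (k : ℝ → ℝ) (ψ : ℝ) : Prop :=
  (∃ b k1 k2 k3, KSRep1 k b k1 k2 k3 ∧ ψ = |k1 - k2|) ∨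
  (∃ b k1 k2 k3, KSRep2 k b k1 k2 k3 ∧ ψ = |k2 - k3|)

set_option maxHeartbeats 2000000
section FPhelpers

lemma int_of_Ioo {f : ℝ → ℝ} {a b c : ℝ} (hab : a ≤ b) (h : ∀ x ∈ Ioo a b, f x = c) :
    ∫ x in Ioc a b, f x = c * (b - a) := by
  rw [setIntegral_congr_set Ioo_ae_eq_Ioc.symm, setIntegral_congr_fun measurableSet_Ioo h,
    setIntegral_const, Real.volume_real_Ioo_of_le hab, smul_eq_mul,
    mul_comm]

lemma intOn_of_Ioo {f : ℝ → ℝ} {a b c : ℝ} (h : ∀ x ∈ Ioo a b, f x = c) :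
    IntegrableOn f (Ioc a b) := by
  have h1 : IntegrableOn f (Ioo a b) := by
    refine ((integrableOn_const_iff (C := c)).2 (Or.inr ?_)).congr_fun (fun x hx => (h x hx).symm) measurableSet_Ioo
    simp [Real.volume_Ioo]
  exact h1.congr_set_ae Ioo_ae_eq_Ioc.symm

lemma int3 {f : ℝ → ℝ} {x y a b c : ℝ} (h0 : 0 ≤ x) (hxy : x ≤ y) (hy : y ≤ 1)
    (h1 : ∀ s ∈ Ioo 0 x, f s = a) (h2 : ∀ s ∈ Ioo x y, f s = b)
    (h3 : ∀ s ∈ Ioo y 1, f s = c) :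
    ∫ s in Icc (0:ℝ) 1, f s = a * x + b * (y - x) + c * (1 - y) := by
  rw [integral_Icc_eq_integral_Ioc]
  have e1 : Ioc (0:ℝ) 1 = Ioc 0 x ∪ Ioc x 1 := (Ioc_union_Ioc_eq_Ioc h0 (hxy.trans hy)).symm
  have e2 : Ioc x 1 = Ioc x y ∪ Ioc y 1 := (Ioc_union_Ioc_eq_Ioc hxy hy).symm
  rw [e1, setIntegral_union (Ioc_disjoint_Ioc_of_le le_rfl) measurableSet_Ioc (intOn_of_Ioo h1)
      (by rw [e2]; exact (intOn_of_Ioo h2).union (intOn_of_Ioo h3)),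
    e2, setIntegral_union (Ioc_disjoint_Ioc_of_le le_rfl) measurableSet_Ioc (intOn_of_Ioo h2)
      (intOn_of_Ioo h3), int_of_Ioo h0 h1, int_of_Ioo hxy h2, int_of_Ioo hy h3]
  ring

lemma finish1 {ε δ : ℝ} {k : ℝ → ℝ} {m a b c C J : ℝ}
    (hm : m ∈ Ioo (0:ℝ) (1/2)) (ha : 0 ≤ a) (hb : 0 ≤ b) (hc : 0 ≤ c)
    (h1 : ∀ s ∈ Ioo 0 m, FPpre ε δ k s = a)
    (h2 : ∀ s ∈ Ioo m (1/2:ℝ), FPpre ε δ k s = b)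
    (h3 : ∀ s ∈ Ioo (1/2:ℝ) 1, FPpre ε δ k s = c)
    (hC : C = ∫ s in Icc (0:ℝ) 1, FPpre ε δ k s)
    (hClb : 2/3 ≤ C) (hj : |a - b| ≤ J / 2) :
    (∫ s in Icc (0:ℝ) 1, FPop ε δ k s) = 1 ∧
    KSRep1 (FPop ε δ k) m (a/C) (b/C) (c/C) ∧ |a/C - b/C| ≤ 3/4 * J := by
  have hC0 : 0 < C := by linarith
  have hfop : ∀ s, FPop ε δ k s = FPpre ε δ k s / C := fun s => by rw [FPop, hC]
  refine ⟨?_, ⟨hm, by positivity, by positivity, by positivity,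
      fun s hs => by rw [hfop, h1 s hs], fun s hs => by rw [hfop, h2 s hs],
      fun s hs => by rw [hfop, h3 s hs]⟩, ?_⟩
  · simp only [hfop]
    rw [integral_div, ← hC, div_self hC0.ne']
  · have he : a/C - b/C = (a-b)/C := by ring
    rw [he, abs_div, abs_of_pos hC0]
    have h4 : |a - b|/C ≤ (J/2)/(2/3) := by
      apply div_le_div₀ (le_trans (abs_nonneg _) hj) hj (by norm_num) hClb
    have : (J/2)/(2/3) = 3/4 * J := by ring
    linarith

lemma finish2 {ε δ : ℝ} {k : ℝ → ℝ} {M a b c C J : ℝ}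
    (hM : M ∈ Ioo (1/2:ℝ) 1) (ha : 0 ≤ a) (hb : 0 ≤ b) (hc : 0 ≤ c)
    (h1 : ∀ s ∈ Ioo (0:ℝ) (1/2), FPpre ε δ k s = a)
    (h2 : ∀ s ∈ Ioo (1/2:ℝ) M, FPpre ε δ k s = b)
    (h3 : ∀ s ∈ Ioo M 1, FPpre ε δ k s = c)
    (hC : C = ∫ s in Icc (0:ℝ) 1, FPpre ε δ k s)
    (hClb : 2/3 ≤ C) (hj : |b - c| ≤ J / 2) :
    (∫ s in Icc (0:ℝ) 1, FPop ε δ k s) = 1 ∧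
    KSRep2 (FPop ε δ k) M (a/C) (b/C) (c/C) ∧ |b/C - c/C| ≤ 3/4 * J := by
  have hC0 : 0 < C := by linarith
  have hfop : ∀ s, FPop ε δ k s = FPpre ε δ k s / C := fun s => by rw [FPop, hC]
  refine ⟨?_, ⟨hM, by positivity, by positivity, by positivity,
      fun s hs => by rw [hfop, h1 s hs], fun s hs => by rw [hfop, h2 s hs],
      fun s hs => by rw [hfop, h3 s hs]⟩, ?_⟩
  · simp only [hfop]
    rw [integral_div, ← hC, div_self hC0.ne']
  · have he : b/C - c/C = (b-c)/C := by ring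
    rw [he, abs_div, abs_of_pos hC0]
    have h4 : |b - c|/C ≤ (J/2)/(2/3) := by
      apply div_le_div₀ (le_trans (abs_nonneg _) hj) hj (by norm_num) hClb
    have : (J/2)/(2/3) = 3/4 * J := by ring
    linarith

lemma FPpre_lt {ε δ : ℝ} (k : ℝ → ℝ) {s : ℝ} (hs : s < 1/2) {v1 v2 v3 : ℝ}
    (h1 : k (s / (4 + ε)) = v1) (h2 : k (((3 + δ) / 2 - s) / (2 + δ)) = v2)
    (h3 : k ((s + 3 + δ) / (4 + δ)) = v3) :
    FPpre ε δ k s = v1 / (4 + ε) + v2 / (2 + δ) + v3 / (4 + δ) := by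
  rw [FPpre, if_pos hs, h1, h2, h3]

lemma FPpre_ge {ε δ : ℝ} (k : ℝ → ℝ) {s : ℝ} (hs : ¬ s < 1/2) {v1 v2 v3 : ℝ}
    (h1 : k (s / (4 + ε)) = v1) (h2 : k (((3 + ε) / 2 - s) / (2 + ε)) = v2)
    (h3 : k ((s + 3 + δ) / (4 + δ)) = v3) :
    FPpre ε δ k s = v1 / (4 + ε) + v2 / (2 + ε) + v3 / (4 + δ) := by
  rw [FPpre, if_neg hs, h1, h2, h3]

lemma div_mem_Ioo {x c lo hi : ℝ} (hc : 0 < c) (h1 : lo * c < x) (h2 : x < hi * c) :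
    x / c ∈ Ioo lo hi :=
  ⟨(lt_div_iff₀ hc).2 (by linarith), (div_lt_iff₀ hc).2 (by linarith)⟩

lemma jump_le {x y p q : ℝ} (h : x - y = p / q) (hq : 2 ≤ q) : |x - y| ≤ |p| / 2 := by
  rw [h, abs_div, abs_of_pos (by linarith : (0:ℝ) < q)]
  exact div_le_div_of_nonneg_left (abs_nonneg p) (by norm_num) hq

lemma core1 {ε δ b k1 k2 k3 : ℝ} {k : ℝ → ℝ}
    (hε0 : 0 < ε) (hεw : ε < 1/10) (hδ0 : 0 < δ) (hδw : δ < 1/10)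
    (hrep : KSRep1 k b k1 k2 k3) (hint : (∫ s in Icc (0:ℝ) 1, k s) = 1) :
    (∫ s in Icc (0:ℝ) 1, FPop ε δ k s) = 1 ∧
    ((∃ b' c1 c2 c3, KSRep1 (FPop ε δ k) b' c1 c2 c3 ∧ |c1 - c2| ≤ 3/4 * |k1 - k2|) ∨
     (∃ b' c1 c2 c3, KSRep2 (FPop ε δ k) b' c1 c2 c3 ∧ |c2 - c3| ≤ 3/4 * |k1 - k2|)) := by
  obtain ⟨⟨hb0, hb5⟩, hk1, hk2, hk3, hf1, hf2, hf3⟩ := hrep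
  have hE : (0:ℝ) < 4 + ε := by linarith
  have he : (0:ℝ) < 2 + ε := by linarith
  have hD : (0:ℝ) < 4 + δ := by linarith
  have hd : (0:ℝ) < 2 + δ := by linarith
  have hεb : 0 < ε * b := mul_pos hε0 hb0
  have hεb2 : ε * b < ε / 2 := by
    have := mul_pos hε0 (show (0:ℝ) < 1/2 - b by linarith); linarith [this.le]
  have hεbb : ε * b < b / 10 := by
    have := mul_pos hb0 (show (0:ℝ) < 1/10 - ε by linarith); linarith [this.le]
  have hintk : k1 * b + k2 * (1/2 - b) + k3 * (1 - 1/2) = 1 :=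
    (int3 hb0.le hb5.le (by norm_num) hf1 hf2 hf3).symm.trans hint
  have hk3b : k3 ≤ 2 := by
    linarith [mul_nonneg hk1 hb0.le, mul_nonneg hk2 (by linarith : (0:ℝ) ≤ 1/2 - b)]
  have rE1 : 1/(4+ε) ≤ 1/4 := by rw [div_le_div_iff₀ hE (by norm_num)]; linarith
  have rE2 : (6:ℝ)/25 ≤ 1/(4+ε) := by rw [div_le_div_iff₀ (by norm_num) hE]; linarith
  have re1 : 1/(2*(2+ε)) ≤ 1/4 := by rw [div_le_div_iff₀ (by linarith) (by norm_num)]; linarith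
  have re2 : (19:ℝ)/80 ≤ 1/(2*(2+ε)) := by rw [div_le_div_iff₀ (by norm_num) (by linarith)]; linarith
  have rD1 : 1/(4+δ) ≤ 1/4 := by rw [div_le_div_iff₀ hD (by norm_num)]; linarith
  have rD2 : (6:ℝ)/25 ≤ 1/(4+δ) := by rw [div_le_div_iff₀ (by norm_num) hD]; linarith
  have rd1 : 1/(2*(2+δ)) ≤ 1/4 := by rw [div_le_div_iff₀ (by linarith) (by norm_num)]; linarith
  have rd2 : (19:ℝ)/80 ≤ 1/(2*(2+δ)) := by rw [div_le_div_iff₀ (by norm_num) (by linarith)]; linarith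
  set C := ∫ s in Icc (0:ℝ) 1, FPpre ε δ k s with hC
  have eA1 : ∀ s ∈ Ioo (0:ℝ) (1/2), s < (4+ε)*b →
      FPpre ε δ k s = k1/(4+ε) + k3/(2+δ) + k3/(4+δ) := by
    rintro s ⟨hs0, hs5⟩ hsb
    exact FPpre_lt k hs5
      (hf1 _ (div_mem_Ioo hE (by linarith) (by linarith)))
      (hf3 _ (div_mem_Ioo hd (by linarith) (by linarith)))
      (hf3 _ (div_mem_Ioo hD (by linarith) (by linarith)))
  have eA2 : ∀ s ∈ Ioo (0:ℝ) (1/2), (4+ε)*b < s →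
      FPpre ε δ k s = k2/(4+ε) + k3/(2+δ) + k3/(4+δ) := by
    rintro s ⟨hs0, hs5⟩ hsb
    exact FPpre_lt k hs5
      (hf2 _ (div_mem_Ioo hE (by linarith) (by linarith)))
      (hf3 _ (div_mem_Ioo hd (by linarith) (by linarith)))
      (hf3 _ (div_mem_Ioo hD (by linarith) (by linarith)))
  have eA3 : (4+ε)*b ≤ 1/2 → ∀ s ∈ Ioo (1/2:ℝ) 1,
      FPpre ε δ k s = k2/(4+ε) + k2/(2+ε) + k3/(4+δ) := by
    rintro hcond s ⟨hs5, hs1⟩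
    exact FPpre_ge k (not_lt.2 hs5.le)
      (hf2 _ (div_mem_Ioo hE (by linarith) (by linarith)))
      (hf2 _ (div_mem_Ioo he (by linarith) (by linarith)))
      (hf3 _ (div_mem_Ioo hD (by linarith) (by linarith)))
  rcases lt_trichotomy ((4+ε)*b) (1/2) with hq | hq | hq
  · -- 1a : break at (4+ε)*b in (0,1/2)
    have hb' : 0 < (4+ε)*b := mul_pos hE hb0
    have e1 : ∀ s ∈ Ioo (0:ℝ) ((4+ε)*b), FPpre ε δ k s = k1/(4+ε) + k3/(2+δ) + k3/(4+δ) :=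
      fun s hs => eA1 s ⟨hs.1, by linarith [hs.2]⟩ hs.2
    have e2 : ∀ s ∈ Ioo ((4+ε)*b) (1/2:ℝ), FPpre ε δ k s = k2/(4+ε) + k3/(2+δ) + k3/(4+δ) :=
      fun s hs => eA2 s ⟨by linarith [hs.1], hs.2⟩ hs.1
    have e3 := eA3 hq.le
    have hCval : C = (k1/(4+ε) + k3/(2+δ) + k3/(4+δ)) * ((4+ε)*b)
        + (k2/(4+ε) + k3/(2+δ) + k3/(4+δ)) * (1/2 - (4+ε)*b)
        + (k2/(4+ε) + k2/(2+ε) + k3/(4+δ)) * (1 - 1/2) := by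
      rw [hC]; exact int3 hb'.le hq.le (by norm_num) e1 e2 e3
    have hC2 : C = k1*b + k2*(1/(4+ε) + 1/(2*(2+ε)) - b) + k3*(1/(2*(2+δ)) + 1/(4+δ)) := by
      rw [hCval]; field_simp; ring
    have hb8 : b ≤ 1/8 := by linarith
    have hk2b : k2 ≤ 8/3 := by
      linarith [mul_nonneg hk2 (by linarith : (0:ℝ) ≤ 1/2 - b - 3/8), mul_nonneg hk1 hb0.le]
    have hClb : 2/3 ≤ C := by
      linarith [mul_nonneg hk2 (by linarith : (0:ℝ) ≤ 1/(4+ε) + 1/(2*(2+ε)) - 19/40),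
        mul_nonneg hk3 (by linarith : (0:ℝ) ≤ 1/(2*(2+δ)) + 1/(4+δ) - 19/40)]
    have hj : |(k1/(4+ε) + k3/(2+δ) + k3/(4+δ)) - (k2/(4+ε) + k3/(2+δ) + k3/(4+δ))|
        ≤ |k1 - k2| / 2 := jump_le (p := k1 - k2) (q := 4 + ε) (by ring) (by linarith)
    obtain ⟨hi, hrep', hjump⟩ := finish1 ⟨hb', hq⟩
      (by positivity) (by positivity) (by positivity) e1 e2 e3 hC hClb hj
    exact ⟨hi, Or.inl ⟨_, _, _, _, hrep', hjump⟩⟩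
  · -- 1deg : (4+ε)*b = 1/2, constant halves
    have e1 : ∀ s ∈ Ioo (0:ℝ) (1/2), FPpre ε δ k s = k1/(4+ε) + k3/(2+δ) + k3/(4+δ) :=
      fun s hs => eA1 s hs (by linarith [hs.2])
    have e3 := eA3 hq.le
    have e2' : ∀ s ∈ Ioo (1/2:ℝ) (3/4), FPpre ε δ k s = k2/(4+ε) + k2/(2+ε) + k3/(4+δ) :=
      fun s hs => e3 s ⟨hs.1, by linarith [hs.2]⟩
    have e3' : ∀ s ∈ Ioo (3/4:ℝ) 1, FPpre ε δ k s = k2/(4+ε) + k2/(2+ε) + k3/(4+δ) :=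
      fun s hs => e3 s ⟨by linarith [hs.1], hs.2⟩
    have hCval : C = (k1/(4+ε) + k3/(2+δ) + k3/(4+δ)) * (1/2)
        + (k2/(4+ε) + k2/(2+ε) + k3/(4+δ)) * (3/4 - 1/2)
        + (k2/(4+ε) + k2/(2+ε) + k3/(4+δ)) * (1 - 3/4) := by
      rw [hC]; exact int3 (by norm_num) (by norm_num) (by norm_num) e1 e2' e3'
    have hbv : b = 1/(2*(4+ε)) := by field_simp; linarith
    have hC2 : C = k1*b + k2*(1/(4+ε) + 1/(2*(2+ε)) - b) + k3*(1/(2*(2+δ)) + 1/(4+δ)) := by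
      rw [hCval, hbv]; field_simp; ring
    have hb8 : b ≤ 1/8 := by linarith
    have hk2b : k2 ≤ 8/3 := by
      linarith [mul_nonneg hk2 (by linarith : (0:ℝ) ≤ 1/2 - b - 3/8), mul_nonneg hk1 hb0.le]
    have hClb : 2/3 ≤ C := by
      linarith [mul_nonneg hk2 (by linarith : (0:ℝ) ≤ 1/(4+ε) + 1/(2*(2+ε)) - 19/40),
        mul_nonneg hk3 (by linarith : (0:ℝ) ≤ 1/(2*(2+δ)) + 1/(4+δ) - 19/40)]
    have hj : |(k2/(4+ε) + k2/(2+ε) + k3/(4+δ)) - (k2/(4+ε) + k2/(2+ε) + k3/(4+δ))|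
        ≤ |k1 - k2| / 2 := by rw [sub_self, abs_zero]; positivity
    obtain ⟨hi, hrep', hjump⟩ := finish2 (by norm_num) (by positivity) (by positivity)
      (by positivity) e1 e2' e3' hC hClb hj
    exact ⟨hi, Or.inr ⟨_, _, _, _, hrep', hjump⟩⟩
  · -- (4+ε)*b > 1/2
    have e1 : ∀ s ∈ Ioo (0:ℝ) (1/2), FPpre ε δ k s = k1/(4+ε) + k3/(2+δ) + k3/(4+δ) :=
      fun s hs => eA1 s hs (by linarith [hs.2])
    rcases lt_or_ge ((4+ε)*b) 1 with h1b | h1b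
    · -- 1b : break at (4+ε)*b in (1/2,1)
      have e2 : ∀ s ∈ Ioo (1/2:ℝ) ((4+ε)*b),
          FPpre ε δ k s = k1/(4+ε) + k2/(2+ε) + k3/(4+δ) := by
        rintro s ⟨hs5, hsb⟩
        exact FPpre_ge k (not_lt.2 hs5.le)
          (hf1 _ (div_mem_Ioo hE (by linarith) (by linarith)))
          (hf2 _ (div_mem_Ioo he (by linarith) (by linarith)))
          (hf3 _ (div_mem_Ioo hD (by linarith) (by linarith)))
      have e3 : ∀ s ∈ Ioo ((4+ε)*b) 1,
          FPpre ε δ k s = k2/(4+ε) + k2/(2+ε) + k3/(4+δ) := by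
        rintro s ⟨hsb, hs1⟩
        have hs5 : 1/2 < s := by linarith
        exact FPpre_ge k (not_lt.2 hs5.le)
          (hf2 _ (div_mem_Ioo hE (by linarith) (by linarith)))
          (hf2 _ (div_mem_Ioo he (by linarith) (by linarith)))
          (hf3 _ (div_mem_Ioo hD (by linarith) (by linarith)))
      have hCval : C = (k1/(4+ε) + k3/(2+δ) + k3/(4+δ)) * (1/2)
          + (k1/(4+ε) + k2/(2+ε) + k3/(4+δ)) * ((4+ε)*b - 1/2)
          + (k2/(4+ε) + k2/(2+ε) + k3/(4+δ)) * (1 - (4+ε)*b) := by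
        rw [hC]; exact int3 (by norm_num) hq.le h1b.le e1 e2 e3
      have hC2 : C = k1*b + k2*(1/(4+ε) + 1/(2*(2+ε)) - b) + k3*(1/(2*(2+δ)) + 1/(4+δ)) := by
        rw [hCval]; field_simp; ring
      have hb4 : b ≤ 1/4 := by linarith
      have hk2b : k2 ≤ 4 := by
        linarith [mul_nonneg hk2 (by linarith : (0:ℝ) ≤ 1/2 - b - 1/4), mul_nonneg hk1 hb0.le]
      have hClb : 2/3 ≤ C := by
        linarith [mul_nonneg hk2 (by linarith : (0:ℝ) ≤ 1/(4+ε) + 1/(2*(2+ε)) - 19/40),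
          mul_nonneg hk3 (by linarith : (0:ℝ) ≤ 1/(2*(2+δ)) + 1/(4+δ) - 19/40)]
      have hj : |(k1/(4+ε) + k2/(2+ε) + k3/(4+δ)) - (k2/(4+ε) + k2/(2+ε) + k3/(4+δ))|
          ≤ |k1 - k2| / 2 := jump_le (p := k1 - k2) (q := 4 + ε) (by ring) (by linarith)
      obtain ⟨hi, hrep', hjump⟩ := finish2 ⟨hq, h1b⟩ (by positivity) (by positivity)
        (by positivity) e1 e2 e3 hC hClb hj
      exact ⟨hi, Or.inr ⟨_, _, _, _, hrep', hjump⟩⟩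
    · rcases le_or_gt ((2+ε)*b) ((1+ε)/2) with hr | hr
      · -- 1c : no break
        have eH : ∀ s ∈ Ioo (1/2:ℝ) 1,
            FPpre ε δ k s = k1/(4+ε) + k2/(2+ε) + k3/(4+δ) := by
          rintro s ⟨hs5, hs1⟩
          exact FPpre_ge k (not_lt.2 hs5.le)
            (hf1 _ (div_mem_Ioo hE (by linarith) (by linarith)))
            (hf2 _ (div_mem_Ioo he (by linarith) (by linarith)))
            (hf3 _ (div_mem_Ioo hD (by linarith) (by linarith)))
        have e2' : ∀ s ∈ Ioo (1/2:ℝ) (3/4), FPpre ε δ k s = k1/(4+ε) + k2/(2+ε) + k3/(4+δ) :=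
          fun s hs => eH s ⟨hs.1, by linarith [hs.2]⟩
        have e3' : ∀ s ∈ Ioo (3/4:ℝ) 1, FPpre ε δ k s = k1/(4+ε) + k2/(2+ε) + k3/(4+δ) :=
          fun s hs => eH s ⟨by linarith [hs.1], hs.2⟩
        have hCval : C = (k1/(4+ε) + k3/(2+δ) + k3/(4+δ)) * (1/2)
            + (k1/(4+ε) + k2/(2+ε) + k3/(4+δ)) * (3/4 - 1/2)
            + (k1/(4+ε) + k2/(2+ε) + k3/(4+δ)) * (1 - 3/4) := by
          rw [hC]; exact int3 (by norm_num) (by norm_num) (by norm_num) e1 e2' e3'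
        have hC2 : C = k1*(1/(4+ε)) + k2*(1/(2*(2+ε))) + k3*(1/(2*(2+δ)) + 1/(4+δ)) := by
          rw [hCval]; field_simp; ring
        have hblo : 10/41 ≤ b := by linarith [hεbb]
        have hbhi : b ≤ 11/40 := by linarith
        have hk1b : k1 ≤ 41/10 := by
          linarith [mul_nonneg hk1 (by linarith : (0:ℝ) ≤ b - 10/41),
            mul_nonneg hk2 (by linarith : (0:ℝ) ≤ 1/2 - b), mul_nonneg hk3 (by norm_num : (0:ℝ) ≤ 1 - 1/2)]
        have hk2b : k2 ≤ 40/9 := by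
          linarith [mul_nonneg hk2 (by linarith : (0:ℝ) ≤ 1/2 - b - 9/40), mul_nonneg hk1 hb0.le]
        have hClb : 2/3 ≤ C := by
          linarith [mul_nonneg hk1 (by linarith : (0:ℝ) ≤ 1/(4+ε) - b + 7/200),
            mul_nonneg hk2 (by linarith : (0:ℝ) ≤ 1/(2*(2+ε)) + b - 1/2 + 19/1000),
            mul_nonneg hk3 (by linarith : (0:ℝ) ≤ 1/(2*(2+δ)) + 1/(4+δ) - 19/40)]
        have hj : |(k1/(4+ε) + k2/(2+ε) + k3/(4+δ)) - (k1/(4+ε) + k2/(2+ε) + k3/(4+δ))|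
            ≤ |k1 - k2| / 2 := by rw [sub_self, abs_zero]; positivity
        obtain ⟨hi, hrep', hjump⟩ := finish2 (by norm_num) (by positivity) (by positivity)
          (by positivity) e1 e2' e3' hC hClb hj
        exact ⟨hi, Or.inr ⟨_, _, _, _, hrep', hjump⟩⟩
      · -- 1d : break at r = (3+ε)/2 - (2+ε)*b in (1/2,1)
        have hr5 : 1/2 < (3+ε)/2 - (2+ε)*b := by linarith
        have hr1 : (3+ε)/2 - (2+ε)*b < 1 := by linarith
        have e2 : ∀ s ∈ Ioo (1/2:ℝ) ((3+ε)/2 - (2+ε)*b),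
            FPpre ε δ k s = k1/(4+ε) + k2/(2+ε) + k3/(4+δ) := by
          rintro s ⟨hs5, hsr⟩
          have hs1 : s < 1 := by linarith
          exact FPpre_ge k (not_lt.2 hs5.le)
            (hf1 _ (div_mem_Ioo hE (by linarith) (by linarith)))
            (hf2 _ (div_mem_Ioo he (by linarith) (by linarith)))
            (hf3 _ (div_mem_Ioo hD (by linarith) (by linarith)))
        have e3 : ∀ s ∈ Ioo ((3+ε)/2 - (2+ε)*b) 1,
            FPpre ε δ k s = k1/(4+ε) + k1/(2+ε) + k3/(4+δ) := by
          rintro s ⟨hsr, hs1⟩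
          have hs5 : 1/2 < s := by linarith
          exact FPpre_ge k (not_lt.2 hs5.le)
            (hf1 _ (div_mem_Ioo hE (by linarith) (by linarith)))
            (hf1 _ (div_mem_Ioo he (by linarith) (by linarith)))
            (hf3 _ (div_mem_Ioo hD (by linarith) (by linarith)))
        have hCval : C = (k1/(4+ε) + k3/(2+δ) + k3/(4+δ)) * (1/2)
            + (k1/(4+ε) + k2/(2+ε) + k3/(4+δ)) * (((3+ε)/2 - (2+ε)*b) - 1/2)
            + (k1/(4+ε) + k1/(2+ε) + k3/(4+δ)) * (1 - ((3+ε)/2 - (2+ε)*b)) := by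
          rw [hC]; exact int3 (by norm_num) hr5.le hr1.le e1 e2 e3
        have hC2 : C = k1*(1/(4+ε) + b - (1+ε)/(2*(2+ε))) + k2*(1/2 - b)
            + k3*(1/(2*(2+δ)) + 1/(4+δ)) := by
          rw [hCval]; field_simp; ring
        have rv : (1+ε)/(2*(2+ε)) ≤ 11/42 := by
          rw [div_le_div_iff₀ (by linarith) (by norm_num)]; linarith
        have hb4 : 1/4 < b := by linarith
        have hk1b : k1 ≤ 4 := by
          linarith [mul_nonneg hk1 (by linarith : (0:ℝ) ≤ b - 1/4),
            mul_nonneg hk2 (by linarith : (0:ℝ) ≤ 1/2 - b)]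
        have hClb : 2/3 ≤ C := by
          linarith [mul_nonneg hk1 (by linarith : (0:ℝ) ≤ 1/(4+ε) - (1+ε)/(2*(2+ε)) + 23/1050),
            mul_nonneg hk3 (by linarith : (0:ℝ) ≤ 1/(2*(2+δ)) + 1/(4+δ) - 19/40)]
        have hj : |(k1/(4+ε) + k2/(2+ε) + k3/(4+δ)) - (k1/(4+ε) + k1/(2+ε) + k3/(4+δ))|
            ≤ |k1 - k2| / 2 := by
          have h := jump_le (p := k2 - k1) (q := 2 + ε)
            (x := k1/(4+ε) + k2/(2+ε) + k3/(4+δ)) (y := k1/(4+ε) + k1/(2+ε) + k3/(4+δ))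
            (by ring) (by linarith)
          rwa [abs_sub_comm k2 k1] at h
        obtain ⟨hi, hrep', hjump⟩ := finish2 ⟨hr5, hr1⟩ (by positivity) (by positivity)
          (by positivity) e1 e2 e3 hC hClb hj
        exact ⟨hi, Or.inr ⟨_, _, _, _, hrep', hjump⟩⟩

lemma core2 {ε δ b k1 k2 k3 : ℝ} {k : ℝ → ℝ}
    (hε0 : 0 < ε) (hεw : ε < 1/10) (hδ0 : 0 < δ) (hδw : δ < 1/10)
    (hrep : KSRep2 k b k1 k2 k3) (hint : (∫ s in Icc (0:ℝ) 1, k s) = 1) :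
    (∫ s in Icc (0:ℝ) 1, FPop ε δ k s) = 1 ∧
    ((∃ b' c1 c2 c3, KSRep1 (FPop ε δ k) b' c1 c2 c3 ∧ |c1 - c2| ≤ 3/4 * |k2 - k3|) ∨
     (∃ b' c1 c2 c3, KSRep2 (FPop ε δ k) b' c1 c2 c3 ∧ |c2 - c3| ≤ 3/4 * |k2 - k3|)) := by
  obtain ⟨⟨hb5, hb1⟩, hk1, hk2, hk3, hf1, hf2, hf3⟩ := hrep
  have hE : (0:ℝ) < 4 + ε := by linarith
  have he : (0:ℝ) < 2 + ε := by linarith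
  have hD : (0:ℝ) < 4 + δ := by linarith
  have hd : (0:ℝ) < 2 + δ := by linarith
  have hδb1 : δ * b < δ := by
    have := mul_pos hδ0 (show (0:ℝ) < 1 - b by linarith); linarith [this.le]
  have hδb2 : δ / 2 < δ * b := by
    have := mul_pos hδ0 (show (0:ℝ) < b - 1/2 by linarith); linarith [this.le]
  have hintk : k1 * (1/2) + k2 * (b - 1/2) + k3 * (1 - b) = 1 :=
    (int3 (by norm_num) hb5.le hb1.le hf1 hf2 hf3).symm.trans hint
  have hk1b : k1 ≤ 2 := by
    linarith [mul_nonneg hk2 (by linarith : (0:ℝ) ≤ b - 1/2),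
      mul_nonneg hk3 (by linarith : (0:ℝ) ≤ 1 - b)]
  have rE1 : 1/(4+ε) ≤ 1/4 := by rw [div_le_div_iff₀ hE (by norm_num)]; linarith
  have rE2 : (6:ℝ)/25 ≤ 1/(4+ε) := by rw [div_le_div_iff₀ (by norm_num) hE]; linarith
  have re1 : 1/(2*(2+ε)) ≤ 1/4 := by rw [div_le_div_iff₀ (by linarith) (by norm_num)]; linarith
  have re2 : (19:ℝ)/80 ≤ 1/(2*(2+ε)) := by rw [div_le_div_iff₀ (by norm_num) (by linarith)]; linarith
  have rD1 : 1/(4+δ) ≤ 1/4 := by rw [div_le_div_iff₀ hD (by norm_num)]; linarith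
  have rD2 : (6:ℝ)/25 ≤ 1/(4+δ) := by rw [div_le_div_iff₀ (by norm_num) hD]; linarith
  have rd1 : 1/(2*(2+δ)) ≤ 1/4 := by rw [div_le_div_iff₀ (by linarith) (by norm_num)]; linarith
  have rd2 : (19:ℝ)/80 ≤ 1/(2*(2+δ)) := by rw [div_le_div_iff₀ (by norm_num) (by linarith)]; linarith
  set C := ∫ s in Icc (0:ℝ) 1, FPpre ε δ k s with hC
  have eB1 : ∀ s ∈ Ioo (0:ℝ) (1/2), (2+δ)*b + s < (3+δ)/2 →
      FPpre ε δ k s = k1/(4+ε) + k3/(2+δ) + k3/(4+δ) := by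
    rintro s ⟨hs0, hs5⟩ hcond
    exact FPpre_lt k hs5
      (hf1 _ (div_mem_Ioo hE (by linarith) (by linarith)))
      (hf3 _ (div_mem_Ioo hd (by linarith) (by linarith)))
      (hf3 _ (div_mem_Ioo hD (by linarith) (by linarith)))
  have eB2 : ∀ s ∈ Ioo (0:ℝ) (1/2), (3+δ)/2 < (2+δ)*b + s → (4+δ)*b < s + 3 + δ →
      FPpre ε δ k s = k1/(4+ε) + k2/(2+δ) + k3/(4+δ) := by
    rintro s ⟨hs0, hs5⟩ hcond hc3
    exact FPpre_lt k hs5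
      (hf1 _ (div_mem_Ioo hE (by linarith) (by linarith)))
      (hf2 _ (div_mem_Ioo hd (by linarith) (by linarith)))
      (hf3 _ (div_mem_Ioo hD (by linarith) (by linarith)))
  have eB2' : ∀ s ∈ Ioo (0:ℝ) (1/2), (3+δ)/2 < (2+δ)*b + s → s + 3 + δ < (4+δ)*b →
      FPpre ε δ k s = k1/(4+ε) + k2/(2+δ) + k2/(4+δ) := by
    rintro s ⟨hs0, hs5⟩ hcond hc3
    exact FPpre_lt k hs5
      (hf1 _ (div_mem_Ioo hE (by linarith) (by linarith)))
      (hf2 _ (div_mem_Ioo hd (by linarith) (by linarith)))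
      (hf2 _ (div_mem_Ioo hD (by linarith) (by linarith)))
  have eB3 : ∀ s ∈ Ioo (1/2:ℝ) 1, (4+δ)*b < s + 3 + δ →
      FPpre ε δ k s = k1/(4+ε) + k1/(2+ε) + k3/(4+δ) := by
    rintro s ⟨hs5, hs1⟩ hc3
    exact FPpre_ge k (not_lt.2 hs5.le)
      (hf1 _ (div_mem_Ioo hE (by linarith) (by linarith)))
      (hf1 _ (div_mem_Ioo he (by linarith) (by linarith)))
      (hf3 _ (div_mem_Ioo hD (by linarith) (by linarith)))
  have eB3' : ∀ s ∈ Ioo (1/2:ℝ) 1, s + 3 + δ < (4+δ)*b →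
      FPpre ε δ k s = k1/(4+ε) + k1/(2+ε) + k2/(4+δ) := by
    rintro s ⟨hs5, hs1⟩ hc3
    exact FPpre_ge k (not_lt.2 hs5.le)
      (hf1 _ (div_mem_Ioo hE (by linarith) (by linarith)))
      (hf1 _ (div_mem_Ioo he (by linarith) (by linarith)))
      (hf2 _ (div_mem_Ioo hD (by linarith) (by linarith)))
  rcases lt_or_ge ((2+δ)*b) ((3+δ)/2) with hqa | hqa
  · -- 2a : break at p = (3+δ)/2 - (2+δ)*b in (0,1/2)
    have hp0 : 0 < (3+δ)/2 - (2+δ)*b := by linarith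
    have hp5 : (3+δ)/2 - (2+δ)*b < 1/2 := by linarith
    have e1 : ∀ s ∈ Ioo (0:ℝ) ((3+δ)/2 - (2+δ)*b),
        FPpre ε δ k s = k1/(4+ε) + k3/(2+δ) + k3/(4+δ) :=
      fun s hs => eB1 s ⟨hs.1, by linarith [hs.2]⟩ (by linarith [hs.2])
    have e2 : ∀ s ∈ Ioo ((3+δ)/2 - (2+δ)*b) (1/2:ℝ),
        FPpre ε δ k s = k1/(4+ε) + k2/(2+δ) + k3/(4+δ) :=
      fun s hs => eB2 s ⟨by linarith [hs.1], hs.2⟩ (by linarith [hs.1])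
        (by linarith [hs.1, hp0])
    have e3 : ∀ s ∈ Ioo (1/2:ℝ) 1, FPpre ε δ k s = k1/(4+ε) + k1/(2+ε) + k3/(4+δ) :=
      fun s hs => eB3 s hs (by linarith [hs.1])
    have hCval : C = (k1/(4+ε) + k3/(2+δ) + k3/(4+δ)) * ((3+δ)/2 - (2+δ)*b)
        + (k1/(4+ε) + k2/(2+δ) + k3/(4+δ)) * (1/2 - ((3+δ)/2 - (2+δ)*b))
        + (k1/(4+ε) + k1/(2+ε) + k3/(4+δ)) * (1 - 1/2) := by
      rw [hC]; exact int3 hp0.le hp5.le (by norm_num) e1 e2 e3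
    have hC2 : C = k1*(1/(4+ε) + 1/(2*(2+ε))) + k2*(b - 1/2)
        + k3*(1/(4+δ) + (3+δ)/(2*(2+δ)) - b) := by
      rw [hCval]; field_simp; ring
    have rz2 : (73:ℝ)/100 ≤ (3+δ)/(2*(2+δ)) := by
      rw [div_le_div_iff₀ (by norm_num) (by linarith)]; linarith
    have hb34 : b < 3/4 := by linarith
    have hk3b : k3 ≤ 4 := by
      linarith [mul_nonneg hk3 (by linarith : (0:ℝ) ≤ 1 - b - 1/4),
        mul_nonneg hk2 (by linarith : (0:ℝ) ≤ b - 1/2)]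
    have hClb : 2/3 ≤ C := by
      linarith [mul_nonneg hk1 (by linarith : (0:ℝ) ≤ 1/(4+ε) + 1/(2*(2+ε)) - 19/40),
        mul_nonneg hk3 (by linarith : (0:ℝ) ≤ 1/(4+δ) + (3+δ)/(2*(2+δ)) - 1 + 3/100)]
    have hj : |(k1/(4+ε) + k3/(2+δ) + k3/(4+δ)) - (k1/(4+ε) + k2/(2+δ) + k3/(4+δ))|
        ≤ |k2 - k3| / 2 := by
      have h := jump_le (p := k3 - k2) (q := 2 + δ)
        (x := k1/(4+ε) + k3/(2+δ) + k3/(4+δ)) (y := k1/(4+ε) + k2/(2+δ) + k3/(4+δ))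
        (by ring) (by linarith)
      rwa [abs_sub_comm k3 k2] at h
    obtain ⟨hi, hrep', hjump⟩ := finish1 ⟨hp0, hp5⟩ (by positivity) (by positivity)
      (by positivity) e1 e2 e3 hC hClb hj
    exact ⟨hi, Or.inl ⟨_, _, _, _, hrep', hjump⟩⟩
  · rcases le_or_gt ((4+δ)*b) (3+δ) with hqb | hqb
    · -- 2b : no break
      have eL : ∀ s ∈ Ioo (0:ℝ) (1/2),
          FPpre ε δ k s = k1/(4+ε) + k2/(2+δ) + k3/(4+δ) :=
        fun s hs => eB2 s hs (by linarith [hs.1]) (by linarith [hs.1])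
      have e1 : ∀ s ∈ Ioo (0:ℝ) (1/4), FPpre ε δ k s = k1/(4+ε) + k2/(2+δ) + k3/(4+δ) :=
        fun s hs => eL s ⟨hs.1, by linarith [hs.2]⟩
      have e2 : ∀ s ∈ Ioo (1/4:ℝ) (1/2), FPpre ε δ k s = k1/(4+ε) + k2/(2+δ) + k3/(4+δ) :=
        fun s hs => eL s ⟨by linarith [hs.1], hs.2⟩
      have e3 : ∀ s ∈ Ioo (1/2:ℝ) 1, FPpre ε δ k s = k1/(4+ε) + k1/(2+ε) + k3/(4+δ) :=
        fun s hs => eB3 s hs (by linarith [hs.1])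
      have hCval : C = (k1/(4+ε) + k2/(2+δ) + k3/(4+δ)) * (1/4)
          + (k1/(4+ε) + k2/(2+δ) + k3/(4+δ)) * (1/2 - 1/4)
          + (k1/(4+ε) + k1/(2+ε) + k3/(4+δ)) * (1 - 1/2) := by
        rw [hC]; exact int3 (by norm_num) (by norm_num) (by norm_num) e1 e2 e3
      have hC2 : C = k1*(1/(4+ε) + 1/(2*(2+ε))) + k2*(1/(2*(2+δ))) + k3*(1/(4+δ)) := by
        rw [hCval]; field_simp; ring
      have hblo : (29:ℝ)/40 ≤ b := by linarith
      have hbhi : b ≤ 61/80 := by linarith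
      have hk2b : k2 ≤ 9/2 := by
        linarith [mul_nonneg hk2 (by linarith : (0:ℝ) ≤ b - 1/2 - 9/40),
          mul_nonneg hk3 (by linarith : (0:ℝ) ≤ 1 - b)]
      have hk3c : k3 ≤ 43/10 := by
        linarith [mul_nonneg hk3 (by linarith : (0:ℝ) ≤ 1 - b - 19/80),
          mul_nonneg hk2 (by linarith : (0:ℝ) ≤ b - 1/2)]
      have hClb : 2/3 ≤ C := by
        linarith [mul_nonneg hk1 (by linarith : (0:ℝ) ≤ 1/(4+ε) + 1/(2*(2+ε)) - 19/40),
          mul_nonneg hk2 (by linarith : (0:ℝ) ≤ 1/(2*(2+δ)) - b + 1/2 + 1/40),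
          mul_nonneg hk3 (by linarith : (0:ℝ) ≤ 1/(4+δ) - 1 + b + 7/200)]
      have hj : |(k1/(4+ε) + k2/(2+δ) + k3/(4+δ)) - (k1/(4+ε) + k2/(2+δ) + k3/(4+δ))|
          ≤ |k2 - k3| / 2 := by rw [sub_self, abs_zero]; positivity
      obtain ⟨hi, hrep', hjump⟩ := finish1 (by norm_num) (by positivity) (by positivity)
        (by positivity) e1 e2 e3 hC hClb hj
      exact ⟨hi, Or.inl ⟨_, _, _, _, hrep', hjump⟩⟩
    · have hb34 : 3/4 < b := by linarith
      rcases lt_trichotomy ((4+δ)*b) (7/2+δ) with hqc | hqc | hqc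
      · -- 2c : break at p2 = (4+δ)*b - (3+δ) in (0,1/2)
        have hp0 : 0 < (4+δ)*b - (3+δ) := by linarith
        have hp5 : (4+δ)*b - (3+δ) < 1/2 := by linarith
        have e1 : ∀ s ∈ Ioo (0:ℝ) ((4+δ)*b - (3+δ)),
            FPpre ε δ k s = k1/(4+ε) + k2/(2+δ) + k2/(4+δ) :=
          fun s hs => eB2' s ⟨hs.1, by linarith [hs.2]⟩ (by linarith [hs.1])
            (by linarith [hs.2])
        have e2 : ∀ s ∈ Ioo ((4+δ)*b - (3+δ)) (1/2:ℝ),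
            FPpre ε δ k s = k1/(4+ε) + k2/(2+δ) + k3/(4+δ) :=
          fun s hs => eB2 s ⟨by linarith [hs.1], hs.2⟩ (by linarith [hs.1])
            (by linarith [hs.1])
        have e3 : ∀ s ∈ Ioo (1/2:ℝ) 1, FPpre ε δ k s = k1/(4+ε) + k1/(2+ε) + k3/(4+δ) :=
          fun s hs => eB3 s hs (by linarith [hs.1])
        have hCval : C = (k1/(4+ε) + k2/(2+δ) + k2/(4+δ)) * ((4+δ)*b - (3+δ))
            + (k1/(4+ε) + k2/(2+δ) + k3/(4+δ)) * (1/2 - ((4+δ)*b - (3+δ)))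
            + (k1/(4+ε) + k1/(2+ε) + k3/(4+δ)) * (1 - 1/2) := by
          rw [hC]; exact int3 hp0.le hp5.le (by norm_num) e1 e2 e3
        have hC2 : C = k1*(1/(4+ε) + 1/(2*(2+ε))) + k2*(1/(2*(2+δ)) + b - (3+δ)/(4+δ))
            + k3*(1 - b) := by
          rw [hCval]; field_simp; ring
        have rw1 : (3+δ)/(4+δ) ≤ 31/41 := by
          rw [div_le_div_iff₀ hD (by norm_num)]; linarith
        have hk2c : k2 ≤ 4 := by
          linarith [mul_nonneg hk2 (by linarith : (0:ℝ) ≤ b - 1/2 - 1/4),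
            mul_nonneg hk3 (by linarith : (0:ℝ) ≤ 1 - b)]
        have hClb : 2/3 ≤ C := by
          linarith [mul_nonneg hk1 (by linarith : (0:ℝ) ≤ 1/(4+ε) + 1/(2*(2+ε)) - 19/40),
            mul_nonneg hk2 (by linarith : (0:ℝ) ≤ 1/(2*(2+δ)) + 1/2 - (3+δ)/(4+δ) + 61/3280)]
        have hj : |(k1/(4+ε) + k2/(2+δ) + k2/(4+δ)) - (k1/(4+ε) + k2/(2+δ) + k3/(4+δ))|
            ≤ |k2 - k3| / 2 := jump_le (p := k2 - k3) (q := 4 + δ) (by ring) (by linarith)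
        obtain ⟨hi, hrep', hjump⟩ := finish1 ⟨hp0, hp5⟩ (by positivity) (by positivity)
          (by positivity) e1 e2 e3 hC hClb hj
        exact ⟨hi, Or.inl ⟨_, _, _, _, hrep', hjump⟩⟩
      · -- 2deg : (4+δ)*b = 7/2+δ, constant halves
        have eL : ∀ s ∈ Ioo (0:ℝ) (1/2),
            FPpre ε δ k s = k1/(4+ε) + k2/(2+δ) + k2/(4+δ) :=
          fun s hs => eB2' s hs (by linarith [hs.1]) (by linarith [hs.2, hqc])
        have e1 : ∀ s ∈ Ioo (0:ℝ) (1/4), FPpre ε δ k s = k1/(4+ε) + k2/(2+δ) + k2/(4+δ) :=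
          fun s hs => eL s ⟨hs.1, by linarith [hs.2]⟩
        have e2 : ∀ s ∈ Ioo (1/4:ℝ) (1/2), FPpre ε δ k s = k1/(4+ε) + k2/(2+δ) + k2/(4+δ) :=
          fun s hs => eL s ⟨by linarith [hs.1], hs.2⟩
        have e3 : ∀ s ∈ Ioo (1/2:ℝ) 1, FPpre ε δ k s = k1/(4+ε) + k1/(2+ε) + k3/(4+δ) :=
          fun s hs => eB3 s hs (by linarith [hs.1, hqc])
        have hCval : C = (k1/(4+ε) + k2/(2+δ) + k2/(4+δ)) * (1/4)
            + (k1/(4+ε) + k2/(2+δ) + k2/(4+δ)) * (1/2 - 1/4)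
            + (k1/(4+ε) + k1/(2+ε) + k3/(4+δ)) * (1 - 1/2) := by
          rw [hC]; exact int3 (by norm_num) (by norm_num) (by norm_num) e1 e2 e3
        have hC2 : C = k1*(1/(4+ε) + 1/(2*(2+ε))) + k2*(1/(2*(2+δ)) + 1/(2*(4+δ)))
            + k3*(1/(2*(4+δ))) := by
          rw [hCval]; field_simp; ring
        have rr2 : (5:ℝ)/41 ≤ 1/(2*(4+δ)) := by
          rw [div_le_div_iff₀ (by norm_num) (by linarith)]; linarith
        have hblo : (69:ℝ)/80 ≤ b := by linarith
        have hbhi : b ≤ 71/80 := by linarith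
        have hk2b : k2 ≤ 80/29 := by
          linarith [mul_nonneg hk2 (by linarith : (0:ℝ) ≤ b - 1/2 - 29/80),
            mul_nonneg hk3 (by linarith : (0:ℝ) ≤ 1 - b)]
        have hk3c : k3 ≤ 80/9 := by
          linarith [mul_nonneg hk3 (by linarith : (0:ℝ) ≤ 1 - b - 9/80),
            mul_nonneg hk2 (by linarith : (0:ℝ) ≤ b - 1/2)]
        have hClb : 2/3 ≤ C := by
          linarith [mul_nonneg hk1 (by linarith : (0:ℝ) ≤ 1/(4+ε) + 1/(2*(2+ε)) - 19/40),
            mul_nonneg hk2 (by linarith : (0:ℝ) ≤ 1/(2*(2+δ)) + 1/(2*(4+δ)) - b + 1/2 + 23/820),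
            mul_nonneg hk3 (by linarith : (0:ℝ) ≤ 1/(2*(4+δ)) - 1 + b + 13/820)]
        have hj : |(k1/(4+ε) + k2/(2+δ) + k2/(4+δ)) - (k1/(4+ε) + k2/(2+δ) + k2/(4+δ))|
            ≤ |k2 - k3| / 2 := by rw [sub_self, abs_zero]; positivity
        obtain ⟨hi, hrep', hjump⟩ := finish1 (by norm_num) (by positivity) (by positivity)
          (by positivity) e1 e2 e3 hC hClb hj
        exact ⟨hi, Or.inl ⟨_, _, _, _, hrep', hjump⟩⟩
      · -- 2d : break at q2 = (4+δ)*b - (3+δ) in (1/2,1)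
        have hq5 : 1/2 < (4+δ)*b - (3+δ) := by linarith
        have hq1 : (4+δ)*b - (3+δ) < 1 := by linarith
        have hb78 : 7/8 < b := by linarith
        have e1 : ∀ s ∈ Ioo (0:ℝ) (1/2),
            FPpre ε δ k s = k1/(4+ε) + k2/(2+δ) + k2/(4+δ) :=
          fun s hs => eB2' s hs (by linarith [hs.1]) (by linarith [hs.2])
        have e2 : ∀ s ∈ Ioo (1/2:ℝ) ((4+δ)*b - (3+δ)),
            FPpre ε δ k s = k1/(4+ε) + k1/(2+ε) + k2/(4+δ) :=
          fun s hs => eB3' s ⟨hs.1, by linarith [hs.2]⟩ (by linarith [hs.2])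
        have e3 : ∀ s ∈ Ioo ((4+δ)*b - (3+δ)) 1,
            FPpre ε δ k s = k1/(4+ε) + k1/(2+ε) + k3/(4+δ) :=
          fun s hs => eB3 s ⟨by linarith [hs.1], hs.2⟩ (by linarith [hs.1])
        have hCval : C = (k1/(4+ε) + k2/(2+δ) + k2/(4+δ)) * (1/2)
            + (k1/(4+ε) + k1/(2+ε) + k2/(4+δ)) * (((4+δ)*b - (3+δ)) - 1/2)
            + (k1/(4+ε) + k1/(2+ε) + k3/(4+δ)) * (1 - ((4+δ)*b - (3+δ))) := by
          rw [hC]; exact int3 (by norm_num) hq5.le hq1.le e1 e2 e3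
        have hC2 : C = k1*(1/(4+ε) + 1/(2*(2+ε))) + k2*(1/(2*(2+δ)) + b - (3+δ)/(4+δ))
            + k3*(1 - b) := by
          rw [hCval]; field_simp; ring
        have rw1 : (3+δ)/(4+δ) ≤ 31/41 := by
          rw [div_le_div_iff₀ hD (by norm_num)]; linarith
        have hk2c : k2 ≤ 8/3 := by
          linarith [mul_nonneg hk2 (by linarith : (0:ℝ) ≤ b - 1/2 - 3/8),
            mul_nonneg hk3 (by linarith : (0:ℝ) ≤ 1 - b)]
        have hClb : 2/3 ≤ C := by
          linarith [mul_nonneg hk1 (by linarith : (0:ℝ) ≤ 1/(4+ε) + 1/(2*(2+ε)) - 19/40),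
            mul_nonneg hk2 (by linarith : (0:ℝ) ≤ 1/(2*(2+δ)) + 1/2 - (3+δ)/(4+δ) + 61/3280)]
        have hj : |(k1/(4+ε) + k1/(2+ε) + k2/(4+δ)) - (k1/(4+ε) + k1/(2+ε) + k3/(4+δ))|
            ≤ |k2 - k3| / 2 := jump_le (p := k2 - k3) (q := 4 + δ) (by ring) (by linarith)
        obtain ⟨hi, hrep', hjump⟩ := finish2 ⟨hq5, hq1⟩ (by positivity) (by positivity)
          (by positivity) e1 e2 e3 hC hClb hj
        exact ⟨hi, Or.inr ⟨_, _, _, _, hrep', hjump⟩⟩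

end FPhelpers

/-- **Lemma 4.9.** For every `S > 0` there are `ω > 0` and `B ∈ [0,1)` such that for all
`0 < ε, δ < ω` and every `k ∈ K_S`, the density `k' = P_{ε,δ}(k)` again belongs to `K_S`
and satisfies `Ψ(k') ≤ B · Ψ(k)`. -/
theorem FP_contracts_KS (S : ℝ) (hS : 0 < S) :
    ∃ ω : ℝ, 0 < ω ∧ ∃ B : ℝ, 0 ≤ B ∧ B < 1 ∧
      ∀ ε δ : ℝ, 0 < ε → ε < ω → 0 < δ → δ < ω →
        ∀ k : ℝ → ℝ, MemKS S k →
          MemKS S (FPop ε δ k) ∧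
          ∀ ψ : ℝ, PsiWitness k ψ →
            ∃ ψ' : ℝ, PsiWitness (FPop ε δ k) ψ' ∧ ψ' ≤ B * ψ := by
  refine ⟨1/10, by norm_num, 3/4, by norm_num, by norm_num, ?_⟩
  intro ε δ hε0 hεw hδ0 hδw k hk
  obtain ⟨hint, hrep⟩ := hk
  constructor
  · rcases hrep with ⟨b, k1, k2, k3, hr, hle⟩ | ⟨b, k1, k2, k3, hr, hle⟩
    · obtain ⟨hi, ho⟩ := core1 hε0 hεw hδ0 hδw hr hint
      refine ⟨hi, ?_⟩
      rcases ho with ⟨b', c1, c2, c3, hr', hj⟩ | ⟨b', c1, c2, c3, hr', hj⟩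
      · exact Or.inl ⟨b', c1, c2, c3, hr', by linarith⟩
      · exact Or.inr ⟨b', c1, c2, c3, hr', by linarith⟩
    · obtain ⟨hi, ho⟩ := core2 hε0 hεw hδ0 hδw hr hint
      refine ⟨hi, ?_⟩
      rcases ho with ⟨b', c1, c2, c3, hr', hj⟩ | ⟨b', c1, c2, c3, hr', hj⟩
      · exact Or.inl ⟨b', c1, c2, c3, hr', by linarith⟩
      · exact Or.inr ⟨b', c1, c2, c3, hr', by linarith⟩
  · intro ψ hψ
    rcases hψ with ⟨b, k1, k2, k3, hr, hψeq⟩ | ⟨b, k1, k2, k3, hr, hψeq⟩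
    · obtain ⟨hi, ho⟩ := core1 hε0 hεw hδ0 hδw hr hint
      rcases ho with ⟨b', c1, c2, c3, hr', hj⟩ | ⟨b', c1, c2, c3, hr', hj⟩
      · exact ⟨|c1 - c2|, Or.inl ⟨b', c1, c2, c3, hr', rfl⟩, by rw [hψeq]; exact hj⟩
      · exact ⟨|c2 - c3|, Or.inr ⟨b', c1, c2, c3, hr', rfl⟩, by rw [hψeq]; exact hj⟩
    · obtain ⟨hi, ho⟩ := core2 hε0 hεw hδ0 hδw hr hint
      rcases ho with ⟨b', c1, c2, c3, hr', hj⟩ | ⟨b', c1, c2, c3, hr', hj⟩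
      · exact ⟨|c1 - c2|, Or.inl ⟨b', c1, c2, c3, hr', rfl⟩, by rw [hψeq]; exact hj⟩
      · exact ⟨|c2 - c3|, Or.inr ⟨b', c1, c2, c3, hr', rfl⟩, by rw [hψeq]; exact hj⟩
end

section
/- For all ε, δ > 0, the Lebesgue measure of the set of points of [0,1] mapped outside the unit interval by F(·; ε, δ) equals ℓ(ε) + ℓ(δ), where ℓ(x) = x(3 + x)/(2(x + 2)(x + 4)); that is, λ({x ∈ [0,1] : F(x; ε, δ) ∉ [0,1]}) = ε(3 + ε)/(2(ε + 2)(ε + 4)) + δ(3 + δ)/(2(δ + 2)(δ + 4)). -/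
/-! On `[0,1]` the map is a continuous zigzag: it leaves the unit interval upwards only around its
peak `F(1/4) = 1 + ε/4`, namely on `(1/(4+ε), (1+ε)/(2(2+ε)))`, an interval of length `ℓ(ε)`, and
downwards only around its trough `F(3/4) = -δ/4`. The reflection `x ↦ 1 - x` conjugates
`F(·; ε, δ)` to `1 - F(·; δ, ε)`, so the lower escape set is the mirror image of the upper one with
the parameters swapped, of length `ℓ(δ)`. -/

open MeasureTheory Set Filter

lemma Fmap_eq_Fpiece {ε δ x : ℝ} (hx : x ∈ Icc (0 : ℝ) 1) : Fmap ε δ x = Fpiece ε δ x := by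
  rcases hx.2.eq_or_lt with rfl | hx1
  · norm_num [Fmap, Fpiece]
  · rw [Fmap, Int.fract_eq_self.2 ⟨hx.1, hx1⟩, Int.floor_eq_zero_iff.2 ⟨hx.1, hx1⟩]
    simp

lemma Fpiece_one_sub (ε δ : ℝ) {x : ℝ} (hx : x ∈ Icc (0 : ℝ) 1) :
    Fpiece ε δ (1 - x) = 1 - Fpiece δ ε x := by
  obtain ⟨hx0, hx1⟩ := hx
  unfold Fpiece
  -- the branches meet continuously, so a breakpoint landing in the "wrong" branch is harmless
  split_ifs <;> first
    | ring1
    | (exfalso; linarith)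
    | (obtain rfl : x = 1 / 4 := by linarith); ring1
    | (obtain rfl : x = 1 / 2 := by linarith); ring1
    | (obtain rfl : x = 3 / 4 := by linarith); ring1

lemma setOf_one_lt_Fpiece {ε δ : ℝ} (hε : 0 < ε) (hδ : 0 ≤ δ) :
    {x ∈ Icc (0 : ℝ) 1 | 1 < Fpiece ε δ x} = Ioo (1 / (4 + ε)) ((1 + ε) / (2 * (2 + ε))) := by
  ext x
  rw [mem_sep_iff, mem_Icc, mem_Ioo, div_lt_iff₀ (by linarith), lt_div_iff₀ (by linarith)]
  unfold Fpiece
  constructor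
  · rintro ⟨⟨hx0, hx1⟩, h⟩
    split_ifs at h <;> constructor <;> nlinarith
  · rintro ⟨h1, h2⟩
    have hx0 : 0 < x := by nlinarith
    have hx : x < 1 / 2 := by nlinarith
    refine ⟨⟨hx0.le, by linarith⟩, ?_⟩
    split_ifs <;> nlinarith

lemma setOf_Fpiece_neg_eq_preimage (ε δ : ℝ) :
    {x ∈ Icc (0 : ℝ) 1 | Fpiece ε δ x < 0}
      = (fun x => 1 - x) ⁻¹' {y ∈ Icc (0 : ℝ) 1 | 1 < Fpiece δ ε y} := by
  ext x
  simp only [mem_preimage, mem_ofPred_eq, mem_Icc]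
  constructor
  · rintro ⟨⟨hx0, hx1⟩, h⟩
    rw [Fpiece_one_sub δ ε ⟨hx0, hx1⟩]
    exact ⟨⟨by linarith, by linarith⟩, by linarith⟩
  · rintro ⟨⟨hx0, hx1⟩, h⟩
    have hx : x ∈ Icc (0 : ℝ) 1 := ⟨by linarith, by linarith⟩
    rw [Fpiece_one_sub δ ε hx] at h
    exact ⟨hx, by linarith⟩

lemma volume_setOf_one_lt_Fpiece {ε δ : ℝ} (hε : 0 < ε) (hδ : 0 ≤ δ) :
    volume {x ∈ Icc (0 : ℝ) 1 | 1 < Fpiece ε δ x}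
      = ENNReal.ofReal (ε * (3 + ε) / (2 * (ε + 2) * (ε + 4))) := by
  rw [setOf_one_lt_Fpiece hε hδ, Real.volume_Ioo]
  congr 1
  field_simp
  ring

lemma volume_setOf_Fpiece_neg {ε δ : ℝ} (hε : 0 ≤ ε) (hδ : 0 < δ) :
    volume {x ∈ Icc (0 : ℝ) 1 | Fpiece ε δ x < 0}
      = ENNReal.ofReal (δ * (3 + δ) / (2 * (δ + 2) * (δ + 4))) := by
  have hmeas : NullMeasurableSet {y ∈ Icc (0 : ℝ) 1 | 1 < Fpiece δ ε y} := by
    rw [setOf_one_lt_Fpiece hδ hε]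
    exact measurableSet_Ioo.nullMeasurableSet
  rw [setOf_Fpiece_neg_eq_preimage, (Measure.measurePreserving_sub_left volume 1).measure_preimage
    hmeas, volume_setOf_one_lt_Fpiece hδ hε]

lemma setOf_Fmap_notMem_Icc (ε δ : ℝ) :
    {x ∈ Icc (0 : ℝ) 1 | Fmap ε δ x ∉ Icc (0 : ℝ) 1}
      = {x ∈ Icc (0 : ℝ) 1 | 1 < Fpiece ε δ x} ∪ {x ∈ Icc (0 : ℝ) 1 | Fpiece ε δ x < 0} := by
  ext x
  simp only [mem_union, mem_sep_iff]
  constructor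
  · rintro ⟨hx, h⟩
    rw [Fmap_eq_Fpiece hx, mem_Icc, not_and_or, not_le, not_le] at h
    tauto
  · rintro (⟨hx, h⟩ | ⟨hx, h⟩) <;>
      refine ⟨hx, ?_⟩ <;> rw [Fmap_eq_Fpiece hx, mem_Icc] <;> intro h' <;> linarith [h'.1, h'.2]

/-- **Equation (4.2).** For all `ε, δ > 0` the Lebesgue measure of the set of points of `[0,1]`
mapped outside the unit interval by `F(·; ε, δ)` equals `ℓ(ε) + ℓ(δ)` where
`ℓ(x) = x(3+x)/(2(x+2)(x+4))`. -/
theorem measure_escape_set (ε δ : ℝ) (hε : 0 < ε) (hδ : 0 < δ) :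
    volume {x ∈ Set.Icc (0 : ℝ) 1 | Fmap ε δ x ∉ Set.Icc (0 : ℝ) 1}
      = ENNReal.ofReal
          (ε * (3 + ε) / (2 * (ε + 2) * (ε + 4)) + δ * (3 + δ) / (2 * (δ + 2) * (δ + 4))) := by
  have hdisj : Disjoint {x ∈ Icc (0 : ℝ) 1 | 1 < Fpiece ε δ x}
      {x ∈ Icc (0 : ℝ) 1 | Fpiece ε δ x < 0} :=
    disjoint_left.2 fun x hup hdown => by linarith [hup.2, hdown.2]
  have hmeas : MeasurableSet {x ∈ Icc (0 : ℝ) 1 | 1 < Fpiece ε δ x} := by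
    rw [setOf_one_lt_Fpiece hε hδ.le]
    exact measurableSet_Ioo
  rw [setOf_Fmap_notMem_Icc, measure_union' hdisj hmeas, volume_setOf_one_lt_Fpiece hε hδ.le,
    volume_setOf_Fpiece_neg hε.le hδ, ENNReal.ofReal_add (by positivity) (by positivity)]
end
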